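/- arXiv:2003.05205 — 3 statements merged into one kernel-verified Lean document; each statement's English description precedes it below -/
import Mathlib

section
/- Let q be a prime power and let f ∈ F_q[T][X] be primitive, irreducible as a polynomial in X over F_q(T), not a constant multiple of X, and suppose f splits completely over F_q((T)). Then the number of distinct roots β of f in F_q((T)) with ord(β) > 0 is at most deg_T f. (Equivalently: if α ≠ 0 is totally T-adic of degree d over F_q(T) and r of its conjugates have positive T-adic valuation, then h(α) ≥ r/d.) -/
/-!
Let `r` be the number of roots of positive order. Since `f` is irreducible over `F(T)` and not a
multiple of `X`, its constant coefficient `f(0) ∈ F[T]` is nonzero. A Laurent series of positive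
order is a power series divisible by `T`, so these roots are distinct roots of `f` in the domain
`F[[T]]`; there `∏ (X - βᵢ)` divides `f`, and comparing constant coefficients gives
`T ^ r ∣ ∏ βᵢ ∣ f(0)`, whence `r ≤ deg_T f(0) ≤ deg_T f`.
-/

open Polynomial

/-- The `T`-degree of `f ∈ F[T][X]`: the maximal `T`-degree of its coefficients
(the variable of the inner polynomial ring plays the role of `T`). -/
noncomputable def degT {F : Type*} [Field F] (f : Polynomial (Polynomial F)) : ℕ :=
  f.support.sup fun i => (f.coeff i).natDegree

/-- View `f ∈ F[T][X]` as a polynomial in `X` over the rational function field `F(T)`. -/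
noncomputable def toRat {F : Type*} [Field F] (f : Polynomial (Polynomial F)) :
    Polynomial (RatFunc F) :=
  f.map (algebraMap (Polynomial F) (RatFunc F))

/-- `f ∈ F[T][X]` splits completely (into linear factors) over the
Laurent series field `F((T))`. -/
def SplitsCompletely {F : Type*} [Field F] (f : Polynomial (Polynomial F)) : Prop :=
  Polynomial.Splits (f.map (algebraMap (Polynomial F) (LaurentSeries F)))

theorem Finset.pow_card_dvd_prod {ι M : Type*} [CommMonoid M] {s : Finset ι} {f : ι → M} {a : M}
    (h : ∀ i ∈ s, a ∣ f i) : a ^ s.card ∣ ∏ i ∈ s, f i := by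
  simpa only [Finset.prod_const] using Finset.prod_dvd_prod_of_dvd (fun _ => a) f h

theorem Polynomial.prod_dvd_coeff_zero_of_isRoot {R : Type*} [CommRing R] [IsDomain R] {p : R[X]}
    (hp : p ≠ 0) {s : Finset R} (hs : ∀ β ∈ s, p.IsRoot β) : ∏ β ∈ s, β ∣ p.coeff 0 := by
  have hdvd : (s.val.map fun β => X - C β).prod ∣ p :=
    (Multiset.prod_X_sub_C_dvd_iff_le_roots hp _).mpr <|
      (Multiset.le_iff_subset s.nodup).mpr fun β hβ => (mem_roots hp).mpr (hs β hβ)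
  have hcoeff : ∏ β ∈ s, -β ∣ p.coeff 0 := by
    obtain ⟨q, hq⟩ := hdvd
    refine ⟨q.coeff 0, ?_⟩
    rw [hq, mul_coeff_zero, ← Finset.prod_eq_multiset_prod, coeff_zero_prod]
    simp only [coeff_sub, coeff_X_zero, coeff_C_zero, zero_sub]
  exact (Finset.prod_dvd_prod_of_dvd _ _ fun β _ => (dvd_neg).mpr dvd_rfl).trans hcoeff

theorem Polynomial.le_natDegree_of_X_pow_dvd_coe {R : Type*} [CommRing R] [IsDomain R] {p : R[X]}
    (hp : p ≠ 0) {n : ℕ} (h : (PowerSeries.X : PowerSeries R) ^ n ∣ (p : PowerSeries R)) :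
    n ≤ p.natDegree := by
  have hX : X ^ n ∣ p := X_pow_dvd_iff.mpr fun d hd => by
    rw [← coeff_coe]; exact PowerSeries.X_pow_dvd_iff.mp h d hd
  simpa using natDegree_le_of_dvd hX hp

section LaurentSeries

variable {F : Type*} [Field F]

theorem LaurentSeries.exists_coe_eq_of_order_pos {β : LaurentSeries F}
    (hβ : 0 < β.order) : ∃ φ : PowerSeries F, PowerSeries.X ∣ φ ∧ (φ : LaurentSeries F) = β := by
  refine ⟨PowerSeries.X ^ β.order.toNat * β.powerSeriesPart, ?_,
    LaurentSeries.X_order_mul_powerSeriesPart (Int.toNat_of_nonneg hβ.le)⟩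
  exact (dvd_pow_self _ (by omega)).mul_right _

theorem LaurentSeries.isRoot_order_pos_subset_image (g : (PowerSeries F)[X]) :
    {β : LaurentSeries F | (g.map (HahnSeries.ofPowerSeries ℤ F)).IsRoot β ∧ 0 < β.order} ⊆
      HahnSeries.ofPowerSeries ℤ F '' {φ | g.IsRoot φ ∧ PowerSeries.X ∣ φ} := by
  rintro β ⟨hroot, hpos⟩
  obtain ⟨φ, hXφ, rfl⟩ := LaurentSeries.exists_coe_eq_of_order_pos hpos
  exact ⟨φ, ⟨(isRoot_map_iff HahnSeries.ofPowerSeries_injective).mp hroot, hXφ⟩, rfl⟩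

end LaurentSeries

theorem PowerSeries.encard_isRoot_X_dvd_le {R : Type*} [CommRing R] [IsDomain R] {f : R[X][X]}
    (h0 : f.coeff 0 ≠ 0) :
    {φ : PowerSeries R | (f.map coeToPowerSeries.ringHom).IsRoot φ ∧ X ∣ φ}.encard ≤
      (f.coeff 0).natDegree := by
  set g := f.map (coeToPowerSeries.ringHom (R := R))
  have hg0 : g.coeff 0 = f.coeff 0 := Polynomial.coeff_map _ 0
  have hg : g ≠ 0 := fun h => h0 <| coe_eq_zero_iff.mp (by rw [← hg0, h, coeff_zero])
  have hfin : {φ | g.IsRoot φ ∧ X ∣ φ}.Finite := (finite_setOfPred_isRoot hg).subset fun _ h => h.1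
  rw [← hfin.coe_toFinset, Set.encard_coe_eq_coe_finsetCard, Nat.cast_le]
  refine le_natDegree_of_X_pow_dvd_coe h0 ?_
  rw [← hg0]
  exact (Finset.pow_card_dvd_prod fun φ hφ => (hfin.mem_toFinset.mp hφ).2).trans
    (prod_dvd_coeff_zero_of_isRoot hg fun φ hφ => (hfin.mem_toFinset.mp hφ).1)

theorem natDegree_coeff_le_degT {F : Type*} [Field F] (f : F[X][X]) (n : ℕ) :
    (f.coeff n).natDegree ≤ degT f := by
  by_cases hn : f.coeff n = 0
  · simp [hn]
  · exact Finset.le_sup (f := fun i => (f.coeff i).natDegree) (mem_support_iff.mpr hn)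

theorem coeff_zero_ne_zero_of_irreducible_toRat {F : Type*} [Field F] {f : F[X][X]}
    (hirr : Irreducible (toRat f)) (hX : ∀ c : F[X], f ≠ C c * X) : f.coeff 0 ≠ 0 := by
  intro h0
  have hdvd : X ∣ toRat f := X_dvd_iff.mpr (by rw [toRat, coeff_map, h0, map_zero])
  have hdeg : f.natDegree = 1 := by
    rw [← natDegree_map_eq_of_injective (RatFunc.algebraMap_injective F), ← toRat,
      ← natDegree_X (R := RatFunc F)]
    exact natDegree_eq_of_degree_eq
      (degree_eq_degree_of_associated (irreducible_X.associated_of_dvd hirr hdvd).symm)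
  exact hX (f.coeff 1) (by simpa [h0] using eq_X_add_C_of_natDegree_le_one hdeg.le)

theorem card_positive_valuation_roots_le_general {F : Type*} [Field F]
    (f : Polynomial (Polynomial F))
    (hirr : Irreducible (toRat f))
    (hX : ∀ c : Polynomial F, f ≠ Polynomial.C c * Polynomial.X) :
    {β : LaurentSeries F |
        (f.map (algebraMap (Polynomial F) (LaurentSeries F))).IsRoot β ∧ 0 < β.order}.ncard ≤ degT f := by
  have h0 := coeff_zero_ne_zero_of_irreducible_toRat hirr hX
  have hmap : f.map (algebraMap F[X] (LaurentSeries F)) =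
      (f.map coeToPowerSeries.ringHom).map (HahnSeries.ofPowerSeries ℤ F) := by
    rw [map_map]; rfl
  rw [hmap]
  refine ENat.toNat_le_of_le_natCast ?_
  calc _ ≤ _ := Set.encard_le_encard (LaurentSeries.isRoot_order_pos_subset_image _)
    _ = _ := HahnSeries.ofPowerSeries_injective.encard_image _
    _ ≤ (f.coeff 0).natDegree := PowerSeries.encard_isRoot_X_dvd_le h0
    _ ≤ degT f := Nat.cast_le.mpr (natDegree_coeff_le_degT f 0)

/-- The number of distinct roots of positive valuation of a completely split,
primitive, irreducible $f ∈ F_q[T][X]$ (not a constant multiple of $X$) is at most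
$\deg_T f$. -/
theorem card_positive_valuation_roots_le {F : Type*} [Field F] [Fintype F]
    (f : Polynomial (Polynomial F)) (hprim : f.IsPrimitive)
    (hirr : Irreducible (toRat f))
    (hX : ∀ c : Polynomial F, f ≠ Polynomial.C c * Polynomial.X)
    (hsplit : SplitsCompletely f) :
    {β : LaurentSeries F |
        (f.map (algebraMap (Polynomial F) (LaurentSeries F))).IsRoot β ∧ 0 < β.order}.ncard ≤ degT f :=
  card_positive_valuation_roots_le_general f hirr hX
end

section
/- Let q = 2^s with s ≥ 1 and let c ∈ F_q be an element not of the form a² + a for any a ∈ F_q (i.e. not in the image of the Artin–Schreier map). Then the polynomial f(X) = T·X^{q+1} + X^q + (T+1)·X + c·T ∈ F_q[T][X] is irreducible as a polynomial in X over F_q(T) and splits completely over F_q((T)). In particular, each of its roots is a totally T-adic function of degree q+1 and height 1/(q+1) over F_q(T). -/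
/-!
Viewed as a polynomial in `T`, `f = T (X^(q+1) + X + c) + (X^q + X)` is linear with coprime
coefficients: the roots of `X^q + X` are the elements `a` of `F_q`, at which
`X^(q+1) + X + c` takes the value `a² + a + c ≠ 0`. Hence `f` is irreducible in `F_q[T][X]`,
and, being primitive in `X`, also over `F_q(T)` by Gauss's lemma.

Modulo `T`, both `f` and its reflection `X^(q+1) f(1/X)` reduce to `X^q + X = X^q - X`, whose
`q` roots in `F_q` are simple. Hensel's lemma in `F_q[[T]]` lifts them to roots `x_a ≡ a` of `f`
and to a root `w ≡ 0`, `w ≠ 0`, of the reflection; the `q + 1` distinct elements `x_a` and `1/w`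
of `F_q((T))` are then all the roots of `f`.
-/

open Polynomial

namespace IsAdicComplete

variable {R : Type*} [CommRing R] {I : Ideal R}

theorem smodEq_pow_smul_top_iff {n : ℕ} {x y : R} :
    x ≡ y [SMOD (I ^ n • ⊤ : Submodule R R)] ↔ x - y ∈ I ^ n := by
  rw [SModEq.sub_mem, Ideal.smul_eq_mul, Ideal.mul_top]

/-- Newton's method with the derivative frozen at the starting point: `u` is an inverse of
`f'(a₀)` modulo `I`. -/
noncomputable def newtonSeq (f : R[X]) (u a₀ : R) : ℕ → R
  | 0 => a₀
  | n + 1 => newtonSeq f u a₀ n - u * f.eval (newtonSeq f u a₀ n)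

variable {f : R[X]} {u a₀ : R}

theorem newtonSeq_sub_mem_and_eval_mem (h₀ : f.eval a₀ ∈ I)
    (hu : u * f.derivative.eval a₀ - 1 ∈ I) (n : ℕ) :
    newtonSeq f u a₀ n - a₀ ∈ I ∧ f.eval (newtonSeq f u a₀ n) ∈ I ^ (n + 1) := by
  induction n with
  | zero => simpa [newtonSeq] using h₀
  | succ n ih =>
    obtain ⟨hb, hfb⟩ := ih
    set b := newtonSeq f u a₀ n
    set h := -(u * f.eval b)
    have hsucc : newtonSeq f u a₀ (n + 1) = b + h := sub_eq_add_neg _ _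
    have hh : h ∈ I ^ (n + 1) := (I ^ (n + 1)).neg_mem (Ideal.mul_mem_left _ _ hfb)
    have hderiv : 1 - u * f.derivative.eval b ∈ I := by
      have hd : f.derivative.eval b - f.derivative.eval a₀ ∈ I :=
        Ideal.mem_of_dvd _ (sub_dvd_eval_sub b a₀ _) hb
      have := I.neg_mem (I.add_mem (I.mul_mem_left u hd) hu)
      convert this using 1; ring
    -- Taylor: `f(b + h) = f(b) (1 - u f'(b)) + k h²`, and both terms lie in `I ^ (n + 2)`.
    obtain ⟨k, hk⟩ := exists_mul_sq_add_linear_part_eq_eval_add f b h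
    rw [hsucc]
    refine ⟨?_, ?_⟩
    · convert I.add_mem hb (Ideal.pow_le_self n.succ_ne_zero hh) using 1; ring
    · have hsq : h ^ 2 ∈ I ^ (n + 2) :=
        Ideal.pow_le_pow_right (show n + 2 ≤ (n + 1) * 2 by omega)
          (by rw [pow_mul]; exact Ideal.pow_mem_pow hh 2)
      have hlin : f.eval b * (1 - u * f.derivative.eval b) ∈ I ^ (n + 2) :=
        Ideal.mul_mem_mul hfb hderiv
      rw [← hk]
      convert (I ^ (n + 2)).add_mem (Ideal.mul_mem_left _ k hsq) hlin using 1
      simp only [h]; ring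

theorem newtonSeq_sub_newtonSeq_mem (h₀ : f.eval a₀ ∈ I)
    (hu : u * f.derivative.eval a₀ - 1 ∈ I) {m n : ℕ} (hmn : m ≤ n) :
    newtonSeq f u a₀ m - newtonSeq f u a₀ n ∈ I ^ m := by
  induction n, hmn using Nat.le_induction with
  | base => simp
  | succ n hmn ih =>
    have hstep : u * f.eval (newtonSeq f u a₀ n) ∈ I ^ m :=
      Ideal.pow_le_pow_right (by omega)
        (Ideal.mul_mem_left _ _ (newtonSeq_sub_mem_and_eval_mem h₀ hu n).2)
    convert (I ^ m).add_mem ih hstep using 1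
    simp only [newtonSeq]; ring

-- Unlike `HenselianRing.is_henselian`, `f` need not be monic: here its leading coefficient is `T`.
theorem exists_isRoot_sub_mem [IsAdicComplete I R] (h₀ : f.eval a₀ ∈ I)
    (h₁ : IsUnit (f.derivative.eval a₀)) : ∃ a, f.IsRoot a ∧ a - a₀ ∈ I := by
  set u := (h₁.unit⁻¹ : Rˣ).val
  have hu : u * f.derivative.eval a₀ - 1 ∈ I := by simp [u]
  obtain ⟨L, hL⟩ := IsPrecomplete.prec' (I := I) (newtonSeq f u a₀) fun hmn =>
    smodEq_pow_smul_top_iff.mpr (newtonSeq_sub_newtonSeq_mem h₀ hu hmn)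
  replace hL n := smodEq_pow_smul_top_iff.mp (hL n)
  refine ⟨L, IsHausdorff.haus' (I := I) _ fun n => smodEq_pow_smul_top_iff.mpr ?_, ?_⟩
  · have hval := Ideal.mem_of_dvd _ (sub_dvd_eval_sub _ L f) (hL n)
    simpa using (I ^ n).sub_mem
      (Ideal.pow_le_pow_right n.le_succ (newtonSeq_sub_mem_and_eval_mem h₀ hu n).2) hval
  · convert I.sub_mem (newtonSeq_sub_mem_and_eval_mem h₀ hu 1).1 (by simpa using hL 1) using 1
    ring

end IsAdicComplete

namespace PowerSeries

variable {F : Type*} [Field F]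

theorem exists_isRoot_constantCoeff_eq {g : F⟦X⟧[X]} {a : F}
    (hroot : (g.map constantCoeff).IsRoot a)
    (hsimple : (g.map constantCoeff).derivative.eval a ≠ 0) :
    ∃ x, g.IsRoot x ∧ constantCoeff x = a := by
  have hred (p : F⟦X⟧[X]) : constantCoeff (p.eval (C a)) = (p.map constantCoeff).eval a := by
    rw [eval_map, ← eval₂_at_apply, constantCoeff_C]
  obtain ⟨x, hx, hxa⟩ := IsAdicComplete.exists_isRoot_sub_mem (I := Ideal.span {X})
    (f := g) (a₀ := C a)
    (by rw [Ideal.mem_span_singleton, X_dvd_iff, hred]; exact hroot)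
    (by rw [isUnit_iff_constantCoeff, hred, ← derivative_map]; exact hsimple.isUnit)
  rw [Ideal.mem_span_singleton, X_dvd_iff, map_sub, constantCoeff_C, sub_eq_zero] at hxa
  exact ⟨x, hx, hxa⟩

theorem exists_isRoot_of_map_eq_X_pow_card_sub_X [Fintype F] {g : F⟦X⟧[X]}
    (hg : g.map constantCoeff = (Polynomial.X ^ Fintype.card F - Polynomial.X : F[X])) (a : F) :
    ∃ x, g.IsRoot x ∧ constantCoeff x = a := by
  apply exists_isRoot_constantCoeff_eq <;> rw [hg]
  · simp [FiniteField.pow_card]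
  · simp [derivative_X_pow]

theorem exists_isRoot_reflect_of_map_eq_X_pow_card_sub_X [Fintype F] {g : F⟦X⟧[X]}
    (hg : g.map constantCoeff = (Polynomial.X ^ Fintype.card F - Polynomial.X : F[X]))
    (hlead : g.coeff (Fintype.card F + 1) ≠ 0) :
    ∃ w, (g.reflect (Fintype.card F + 1)).IsRoot w ∧ constantCoeff w = 0 ∧ w ≠ 0 := by
  have hred : (-g.reflect (Fintype.card F + 1)).map constantCoeff =
      (Polynomial.X ^ Fintype.card F - Polynomial.X : F[X]) := by
    have hX := reflect_monomial (R := F) (Fintype.card F + 1) 1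
    rw [pow_one, revAt_le (by omega), Nat.add_sub_cancel] at hX
    rw [Polynomial.map_neg, ← reflect_map, hg, reflect_sub, hX, reflect_monomial,
      revAt_le (by omega), Nat.add_sub_cancel_left, pow_one, neg_sub]
  obtain ⟨w, hw, hw0⟩ := exists_isRoot_of_map_eq_X_pow_card_sub_X hred 0
  refine ⟨w, by simpa using hw, hw0, ?_⟩
  rintro rfl
  simp [IsRoot, ← coeff_zero_eq_eval_zero, coeff_reflect, hlead] at hw

end PowerSeries

theorem Polynomial.splits_of_natDegree_le_card {K : Type*} [Field K] {p : K[X]} (s : Finset K)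
    (hdeg : p.natDegree ≤ s.card) (hroot : ∀ x ∈ s, p.IsRoot x) : Splits p := by
  classical
  rcases eq_or_ne p 0 with rfl | hp
  · simp
  have hsub : s ⊆ p.roots.toFinset := fun x hx => by simpa [hp] using hroot x hx
  rw [splits_iff_card_roots]
  refine le_antisymm (card_roots' p) (hdeg.trans ?_)
  exact (Finset.card_le_card hsub).trans (Multiset.toFinset_card_le _)

theorem Polynomial.isRoot_map_inv_of_isRoot_reflect {R K : Type*} [CommRing R] [Field K]
    (ι : R →+* K) {p : R[X]} {N : ℕ} (hp : p.natDegree ≤ N) {w : R}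
    (hw : (p.reflect N).IsRoot w) (hw0 : ι w ≠ 0) : (p.map ι).IsRoot (ι w)⁻¹ := by
  let := invertibleOfNonzero (inv_ne_zero hw0)
  rw [IsRoot, eval_map, ← eval₂_reflect_eq_zero_iff ι _ N p hp, invOf_eq_inv, inv_inv,
    eval₂_at_apply, hw.eq_zero, map_zero]

theorem Polynomial.constantCoeff_comp_algebraMap (F : Type*) [Field F] :
    (PowerSeries.constantCoeff (R := F)).comp (algebraMap F[X] (PowerSeries F)) =
      Polynomial.constantCoeff := by
  refine RingHom.ext fun p => ?_
  simp [PowerSeries.algebraMap_apply']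

theorem splitsCompletely_of_map_constantCoeff_eq {F : Type*} [Field F] [Fintype F]
    {f : F[X][X]} (hdeg : f.natDegree = Fintype.card F + 1)
    (hred : f.map Polynomial.constantCoeff = X ^ Fintype.card F - X) : SplitsCompletely f := by
  classical
  set q := Fintype.card F
  set fR := f.map (algebraMap F[X] (PowerSeries F))
  set ι := algebraMap (PowerSeries F) (LaurentSeries F)
  have hι : Function.Injective ι := HahnSeries.ofPowerSeries_injective
  have hfR : fR.map PowerSeries.constantCoeff = X ^ q - X := by
    rw [Polynomial.map_map, constantCoeff_comp_algebraMap, hred]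
  have hfRdeg : fR.natDegree ≤ q + 1 := hdeg ▸ natDegree_map_le
  choose xs hxs hxs0 using PowerSeries.exists_isRoot_of_map_eq_X_pow_card_sub_X hfR
  have hlead : fR.coeff (q + 1) ≠ 0 := by
    have hf0 : f ≠ 0 := by rintro rfl; simp at hdeg
    simpa [fR, coeff_map, ← hdeg, PowerSeries.algebraMap_apply'] using hf0
  obtain ⟨w, hw, hw0, hw1⟩ :=
    PowerSeries.exists_isRoot_reflect_of_map_eq_X_pow_card_sub_X hfR hlead
  have hιw : ι w ≠ 0 := (map_ne_zero_iff _ hι).mpr hw1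
  have hmap : f.map (algebraMap F[X] (LaurentSeries F)) = fR.map ι := by
    rw [Polynomial.map_map]; rfl
  set S := insert (ι w)⁻¹ (Finset.univ.image fun a => ι (xs a))
  have hxs_inj : Function.Injective fun a => ι (xs a) := fun a b hab => by
    rw [← hxs0 a, ← hxs0 b, hι hab]
  have hnotmem : (ι w)⁻¹ ∉ Finset.univ.image fun a => ι (xs a) := by
    simp only [Finset.mem_image, Finset.mem_univ, true_and, not_exists]
    intro a ha
    have : xs a * w = 1 := hι (by rw [map_mul, ha, inv_mul_cancel₀ hιw, map_one])
    simpa [hw0] using congrArg PowerSeries.constantCoeff this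
  rw [SplitsCompletely, hmap]
  refine splits_of_natDegree_le_card S ?_ ?_
  · rw [Finset.card_insert_of_notMem hnotmem, Finset.card_image_of_injective _ hxs_inj]
    exact natDegree_map_le.trans hfRdeg
  · simp only [S, Finset.mem_insert, Finset.mem_image, Finset.mem_univ, true_and]
    rintro x (rfl | ⟨a, rfl⟩)
    · exact isRoot_map_inv_of_isRoot_reflect ι hfRdeg hw hιw
    · simp [IsRoot, eval_map, eval₂_at_apply, (hxs a).eq_zero]

theorem FiniteField.isCoprime_X_pow_card_sub_X {K : Type*} [Field K] [Fintype K] {p : K[X]}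
    (hp : ∀ a, ¬ p.IsRoot a) : IsCoprime p (X ^ Fintype.card K - X) := by
  have hcard : 1 < Fintype.card K := Fintype.one_lt_card
  have hmonic : (X ^ Fintype.card K - X : K[X]).Monic :=
    monic_X_pow_sub (by rw [degree_X]; exact_mod_cast hcard)
  have hroots : Multiset.card (X ^ Fintype.card K - X : K[X]).roots =
      (X ^ Fintype.card K - X : K[X]).natDegree := by
    rw [roots_X_pow_card_sub_X, X_pow_card_sub_X_natDegree_eq K hcard]
    rfl
  rw [← prod_multiset_X_sub_C_of_monic_of_roots_card_eq hmonic hroots, roots_X_pow_card_sub_X,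
    ← Finset.prod_eq_multiset_prod]
  refine IsCoprime.prod_right fun a _ => ((irreducible_X_sub_C a).coprime_iff_not_dvd.mpr ?_).symm
  rw [dvd_iff_isRoot]
  exact hp a

theorem Polynomial.isPrimitive_of_coeff_eq_one {R : Type*} [CommSemiring R] {p : R[X]} {n : ℕ}
    (h : p.coeff n = 1) : p.IsPrimitive := fun r hr =>
  isUnit_of_dvd_one (h ▸ (C_dvd_iff_dvd_coeff r p).mp hr n)

theorem irreducible_toRat_of_isCoprime {F : Type*} [Field F] {A B : F[X]} (hA : A ≠ 0)
    (hAB : IsCoprime A B) (hprim : (C X * A.map C + B.map C).IsPrimitive) :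
    Irreducible (toRat (C X * A.map C + B.map C)) := by
  have hswap : Bivariate.swap (C A * X + C B) = C X * A.map C + B.map C := by
    rw [map_add, map_mul, Bivariate.swap_C, Bivariate.swap_C, Bivariate.swap_Y, mul_comm]
  rw [toRat, ← hprim.irreducible_iff_irreducible_map_fraction_map, ← hswap,
    MulEquiv.irreducible_iff]
  exact irreducible_C_mul_X_add_C hA hAB.isRelPrime

theorem degT_le_iff {F : Type*} [Field F] {f : F[X][X]} {n : ℕ} :
    degT f ≤ n ↔ ∀ i, (f.coeff i).natDegree ≤ n := by
  refine Finset.sup_le_iff.trans ⟨fun h i => ?_, fun h i _ => h i⟩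
  by_cases hi : i ∈ f.support
  · exact h i hi
  · simp [notMem_support_iff.mp hi]

section MinHeightPoly

variable {F : Type*} [Field F] [Fintype F]

-- `T X^(q+1) + X^q + (T+1) X + c T`, where `T` is the variable of the coefficient ring `F[T]`.
noncomputable def minHeightPoly (c : F) : F[X][X] :=
  C X * X ^ (Fintype.card F + 1) + X ^ Fintype.card F + C (X + 1) * X + C (C c * X)

variable (c : F)

theorem minHeightPoly_eq :
    minHeightPoly c = C X * (X ^ (Fintype.card F + 1) + X + C c).map C
      + (X ^ Fintype.card F + X : F[X]).map C := by
  simp only [minHeightPoly, Polynomial.map_add, Polynomial.map_pow, map_X, map_C, C_add, C_mul,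
    map_one]
  ring

theorem coeff_minHeightPoly_card : (minHeightPoly c).coeff (Fintype.card F) = 1 := by
  have : 1 < Fintype.card F := Fintype.one_lt_card
  simp [minHeightPoly, add_mul, coeff_X, coeff_C, this.ne, (zero_lt_one.trans this).ne']

theorem coeff_minHeightPoly_card_add_one :
    (minHeightPoly c).coeff (Fintype.card F + 1) = X := by
  simp [minHeightPoly, add_mul, coeff_X, coeff_C]

theorem natDegree_minHeightPoly : (minHeightPoly c).natDegree = Fintype.card F + 1 := by
  unfold minHeightPoly
  compute_degree!

theorem natDegree_coeff_minHeightPoly_le (i : ℕ) :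
    ((minHeightPoly c).coeff i).natDegree ≤ 1 := by
  simp only [minHeightPoly, coeff_add, coeff_C_mul, coeff_X_pow, coeff_X, coeff_C]
  split_ifs <;> compute_degree!

theorem degT_minHeightPoly : degT (minHeightPoly c) = 1 := by
  refine le_antisymm (degT_le_iff.mpr (natDegree_coeff_minHeightPoly_le c)) ?_
  simpa [coeff_minHeightPoly_card_add_one] using
    (degT_le_iff (f := minHeightPoly c)).mp le_rfl (Fintype.card F + 1)

theorem map_constantCoeff_minHeightPoly :
    (minHeightPoly c).map Polynomial.constantCoeff = (X ^ Fintype.card F + X : F[X]) := by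
  simp [minHeightPoly]

theorem irreducible_toRat_minHeightPoly [CharP F 2] (hc : ∀ a : F, a ^ 2 + a ≠ c) :
    Irreducible (toRat (minHeightPoly c)) := by
  have hA : (X ^ (Fintype.card F + 1) + X + C c : F[X]) ≠ 0 :=
    Monic.ne_zero (by monicity!)
  have hAB : IsCoprime (X ^ (Fintype.card F + 1) + X + C c : F[X]) (X ^ Fintype.card F + X) := by
    rw [← CharTwo.sub_eq_add (X ^ Fintype.card F)]
    refine FiniteField.isCoprime_X_pow_card_sub_X fun a ha => hc a ?_
    rw [IsRoot, eval_add, eval_add, eval_pow, eval_X, eval_C, pow_succ, FiniteField.pow_card,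
      CharTwo.add_eq_zero] at ha
    rw [sq, ha]
  rw [minHeightPoly_eq]
  exact irreducible_toRat_of_isCoprime hA hAB
    (minHeightPoly_eq c ▸ isPrimitive_of_coeff_eq_one (coeff_minHeightPoly_card c))

end MinHeightPoly

theorem min_height_example_even_general {F : Type*} [Field F] [Fintype F]
    (s : ℕ) (hq : Fintype.card F = 2 ^ s)
    (c : F) (hc : ∀ a : F, a ^ 2 + a ≠ c)
    (f : Polynomial (Polynomial F))
    (hf : f = Polynomial.C Polynomial.X * Polynomial.X ^ (Fintype.card F + 1)
        + Polynomial.X ^ Fintype.card F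
        + Polynomial.C (Polynomial.X + 1) * Polynomial.X
        + Polynomial.C (Polynomial.C c * Polynomial.X)) :
    Irreducible (toRat f) ∧ SplitsCompletely f ∧
      f.natDegree = Fintype.card F + 1 ∧ degT f = 1 := by
  have : CharP F 2 := charP_of_card_eq_prime_pow hq
  obtain rfl : f = minHeightPoly c := hf
  refine ⟨irreducible_toRat_minHeightPoly c hc, ?_, natDegree_minHeightPoly c,
    degT_minHeightPoly c⟩
  refine splitsCompletely_of_map_constantCoeff_eq (natDegree_minHeightPoly c) ?_
  rw [map_constantCoeff_minHeightPoly, CharTwo.sub_eq_add]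

/-- For $q = 2^s$ and $c ∈ F_q$ not of the form $a^2 + a$, the polynomial
$f = T·X^{q+1} + X^q + (T+1)·X + c·T$ is irreducible over $F_q(T)$ and splits
completely over $F_q((T))$; its roots are totally $T$-adic of degree $q+1$ and
height $1/(q+1)$. -/
theorem min_height_example_even {F : Type*} [Field F] [Fintype F]
    (s : ℕ) (hs : 1 ≤ s) (hq : Fintype.card F = 2 ^ s)
    (c : F) (hc : ∀ a : F, a ^ 2 + a ≠ c)
    (f : Polynomial (Polynomial F))
    (hf : f = Polynomial.C Polynomial.X * Polynomial.X ^ (Fintype.card F + 1)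
        + Polynomial.X ^ Fintype.card F
        + Polynomial.C (Polynomial.X + 1) * Polynomial.X
        + Polynomial.C (Polynomial.C c * Polynomial.X)) :
    Irreducible (toRat f) ∧ SplitsCompletely f ∧
      f.natDegree = Fintype.card F + 1 ∧ degT f = 1 :=
  min_height_example_even_general s hq c hc f hf
end

section
/- Let q be a prime power and let f ∈ F_q[T][X] be primitive, irreducible as a polynomial in X over F_q(T), with deg_T f ≥ 1, and suppose f splits completely over F_q((T)) with every root lying in the power series ring F_q⟦T⟧ (i.e. every root has T-adic valuation ≥ 0). Then deg_X f ≤ q·deg_T f. If moreover every root has T-adic valuation exactly 0 (i.e. every root is a unit of F_q⟦T⟧), then deg_X f ≤ (q−1)·deg_T f. (Equivalently: a nonconstant totally T-adic integer has height ≥ 1/q, and a nonconstant totally T-adic unit has height ≥ 1/(q−1).) -/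
open Polynomial

/-!
Reduce every root `β ∈ F⟦T⟧` of `f` modulo `T` to its constant term `β₀ ∈ F`. For a constant
`c ∈ F` that is not a root, factoring `f` over `F((T))` gives
`ord f(c) = ord (lc f) + ∑_β ord (c - β)`, where every summand is `≥ 0` and is `≥ 1` exactly
when `β₀ = c`. Since `f(c) ∈ F[T]` is nonzero of degree `≤ deg_T f`, at most `deg_T f` roots
reduce to `c`. Irreducibility of degree `≥ 2` rules out constant roots, so summing over the
`q` residues (the `q - 1` nonzero ones, for units) bounds `deg_X f`; degree one is trivial
because `deg_T f ≥ 1`.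
-/

namespace HahnSeries

variable {Γ R : Type*} [AddCommMonoid Γ] [LinearOrder Γ] [IsOrderedCancelAddMonoid Γ]

theorem order_multiset_prod [CommSemiring R] [NoZeroDivisors R] {s : Multiset (HahnSeries Γ R)}
    (hs : s.prod ≠ 0) : s.prod.order = (s.map order).sum := by
  induction s using Multiset.induction_on with
  | empty => simp
  | cons a t ih =>
    rw [Multiset.prod_cons] at hs ⊢
    obtain ⟨ha, ht⟩ := mul_ne_zero_iff.mp hs
    rw [order_mul ha ht, ih ht, Multiset.map_cons, Multiset.sum_cons]

theorem order_eval_eq_of_splits [CommRing R] [IsDomain R] {g : (HahnSeries Γ R)[X]}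
    (hg : g.Splits) {a : HahnSeries Γ R} (ha : g.eval a ≠ 0) :
    (g.eval a).order = g.leadingCoeff.order + (g.roots.map fun β ↦ (a - β).order).sum := by
  rw [hg.eval_eq_prod_roots] at ha ⊢
  obtain ⟨hlc, hprod⟩ := mul_ne_zero_iff.mp ha
  rw [order_mul hlc hprod, order_multiset_prod hprod, Multiset.map_map]
  rfl

end HahnSeries

namespace LaurentSeries

theorem order_coe_powerSeries_nonneg {R : Type*} [Semiring R] (φ : PowerSeries R) :
    0 ≤ (φ : LaurentSeries R).order := by
  by_contra! h
  have hφ : (φ : LaurentSeries R) ≠ 0 := fun h0 ↦ by simp [h0] at h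
  exact hφ (HahnSeries.coeff_order_eq_zero.mp (by rw [PowerSeries.coeff_coe, if_pos h]))

section CommSemiring

variable {R : Type*} [CommSemiring R]

theorem order_algebraMap_polynomial_nonneg (p : R[X]) :
    0 ≤ (algebraMap R[X] (LaurentSeries R) p).order := by
  rw [algebraMap_hahnSeries_apply]
  exact order_coe_powerSeries_nonneg _

theorem order_algebraMap_polynomial_le_natDegree {p : R[X]} (hp : p ≠ 0) :
    (algebraMap R[X] (LaurentSeries R) p).order ≤ p.natDegree := by
  apply HahnSeries.order_le_of_coeff_ne_zero
  rw [algebraMap_hahnSeries_apply, coeff_coe_powerSeries, Polynomial.coeff_coe]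
  exact leadingCoeff_ne_zero.mpr hp

end CommSemiring

section Ring

variable {R : Type*} [Ring R]

theorem order_C_sub_nonneg {x : LaurentSeries R} (hx : 0 ≤ x.order) (c : R) :
    0 ≤ (HahnSeries.C c - x).order := by
  rw [← HahnSeries.zero_le_orderTop_iff] at hx ⊢
  refine le_trans (le_min ?_ hx) HahnSeries.min_orderTop_le_orderTop_sub
  rw [HahnSeries.zero_le_orderTop_iff, HahnSeries.order_C]

theorem one_le_order_of_coeff_zero_eq_zero {x : LaurentSeries R} (hx : x ≠ 0)
    (hnonneg : 0 ≤ x.order) (h0 : x.coeff 0 = 0) : 1 ≤ x.order := by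
  have : x.order ≠ 0 := fun h ↦ hx (HahnSeries.coeff_order_eq_zero.mp (h ▸ h0))
  omega

end Ring

theorem natDegree_le_sum_order_eval_C {R : Type*} [CommRing R] [IsDomain R]
    {g : (LaurentSeries R)[X]} (hg : g.Splits) (hlc : 0 ≤ g.leadingCoeff.order)
    (hroots : ∀ β ∈ g.roots, 0 ≤ β.order) {S : Finset R} (hS : ∀ β ∈ g.roots, β.coeff 0 ∈ S)
    (heval : ∀ c ∈ S, g.eval (HahnSeries.C c) ≠ 0) :
    (g.natDegree : ℤ) ≤ ∑ c ∈ S, (g.eval (HahnSeries.C c)).order := by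
  have hroot : ∀ β ∈ g.roots, 1 ≤ ∑ c ∈ S, (HahnSeries.C c - β).order := by
    intro β hβ
    have hne : HahnSeries.C (β.coeff 0) - β ≠ 0 := fun h ↦
      heval _ (hS β hβ) (by rw [sub_eq_zero.mp h]; exact (mem_roots'.mp hβ).2)
    refine le_trans ?_ (Finset.single_le_sum (fun c _ ↦ order_C_sub_nonneg (hroots β hβ) c)
      (hS β hβ))
    exact one_le_order_of_coeff_zero_eq_zero hne (order_C_sub_nonneg (hroots β hβ) _)
      (by simp [HahnSeries.C_apply])
  calc (g.natDegree : ℤ) = (g.roots.map fun _ ↦ (1 : ℤ)).sum := by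
        simp [← splits_iff_card_roots.mp hg]
    _ ≤ (g.roots.map fun β ↦ ∑ c ∈ S, (HahnSeries.C c - β).order).sum :=
        Multiset.sum_map_le_sum_map _ _ hroot
    _ = ∑ c ∈ S, (g.roots.map fun β ↦ (HahnSeries.C c - β).order).sum :=
        Multiset.sum_map_sum_map _ _
    _ ≤ ∑ c ∈ S, (g.eval (HahnSeries.C c)).order := Finset.sum_le_sum fun c hc ↦ by
        rw [HahnSeries.order_eval_eq_of_splits hg (heval c hc)]
        exact le_add_of_nonneg_left hlc

end LaurentSeries

section DegreeBounds

variable {F : Type*} [Field F]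

theorem natDegree_eval_C_le_degT (f : F[X][X]) (c : F) : (f.eval (C c)).natDegree ≤ degT f := by
  rw [eval_eq_sum_range]
  refine natDegree_sum_le_of_forall_le _ _ fun i _ ↦ ?_
  rw [← C_pow]
  refine (natDegree_mul_C_le _ _).trans ?_
  by_cases h : f.coeff i = 0
  · simp [h]
  · exact Finset.le_sup (f := fun j ↦ (f.coeff j).natDegree) (mem_support_iff.mpr h)

theorem eval_ne_zero_of_irreducible_toRat {f : F[X][X]} (hirr : Irreducible (toRat f))
    (hdeg : f.natDegree ≠ 1) (p : F[X]) : f.eval p ≠ 0 := by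
  intro h
  refine hirr.not_isRoot_of_natDegree_ne_one ?_ (x := algebraMap F[X] (RatFunc F) p) ?_
  · rwa [toRat, natDegree_map_eq_of_injective (IsFractionRing.injective _ _)]
  · rw [IsRoot, toRat, eval_map, eval₂_at_apply, h, map_zero]

theorem natDegree_le_card_mul_degT {f : F[X][X]} (hsplit : SplitsCompletely f)
    (hint : ∀ β : LaurentSeries F,
      (f.map (algebraMap F[X] (LaurentSeries F))).IsRoot β → 0 ≤ β.order)
    {S : Finset F} (hS : ∀ β : LaurentSeries F,
      (f.map (algebraMap F[X] (LaurentSeries F))).IsRoot β → β.coeff 0 ∈ S)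
    (heval : ∀ c ∈ S, f.eval (C c) ≠ 0) :
    f.natDegree ≤ S.card * degT f := by
  have hinj : Function.Injective (algebraMap F[X] (LaurentSeries F)) :=
    algebraMap_hahnSeries_injective _
  have hevalC (c : F) : (f.map (algebraMap F[X] (LaurentSeries F))).eval (HahnSeries.C c) =
      algebraMap F[X] (LaurentSeries F) (f.eval (C c)) := by
    rw [eval_map, ← eval₂_at_apply, algebraMap_hahnSeries_apply]
    simp
  have key := LaurentSeries.natDegree_le_sum_order_eval_C hsplit
    (by rw [leadingCoeff_map_of_injective hinj]; exact
      LaurentSeries.order_algebraMap_polynomial_nonneg _)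
    (fun β hβ ↦ hint β (mem_roots'.mp hβ).2) (fun β hβ ↦ hS β (mem_roots'.mp hβ).2)
    (fun c hc ↦ by rw [hevalC, ne_eq, map_eq_zero_iff _ hinj]; exact heval c hc)
  rw [natDegree_map_eq_of_injective hinj] at key
  have hterm (c : F) (hc : c ∈ S) :
      ((f.map (algebraMap F[X] (LaurentSeries F))).eval (HahnSeries.C c)).order ≤ degT f := by
    rw [hevalC]
    exact (LaurentSeries.order_algebraMap_polynomial_le_natDegree (heval c hc)).trans
      (by exact_mod_cast natDegree_eval_C_le_degT f c)
  have := key.trans (Finset.sum_le_sum hterm)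
  simp only [Finset.sum_const, nsmul_eq_mul] at this
  exact_mod_cast this

end DegreeBounds

theorem integer_and_unit_height_bounds_general {F : Type*} [Field F] [Fintype F]
    (f : Polynomial (Polynomial F))
    (hirr : Irreducible (toRat f))
    (hT : 1 ≤ degT f)
    (hsplit : SplitsCompletely f)
    (hint : ∀ β : LaurentSeries F,
      (f.map (algebraMap (Polynomial F) (LaurentSeries F))).IsRoot β → 0 ≤ β.order) :
    f.natDegree ≤ Fintype.card F * degT f ∧
      ((∀ β : LaurentSeries F,
          (f.map (algebraMap (Polynomial F) (LaurentSeries F))).IsRoot β →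
            β ≠ 0 ∧ β.order = 0) →
        f.natDegree ≤ (Fintype.card F - 1) * degT f) := by
  classical
  have hq : 1 ≤ Fintype.card F - 1 := Nat.le_sub_one_of_lt Fintype.one_lt_card
  have hle : (Fintype.card F - 1) * degT f ≤ Fintype.card F * degT f :=
    Nat.mul_le_mul_right _ (Nat.sub_le _ _)
  by_cases h1 : f.natDegree = 1
  · have : f.natDegree ≤ (Fintype.card F - 1) * degT f := by
      rw [h1]; exact Nat.mul_le_mul hq hT
    exact ⟨this.trans hle, fun _ ↦ this⟩
  have heval (c : F) : f.eval (C c) ≠ 0 := eval_ne_zero_of_irreducible_toRat hirr h1 (C c)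
  refine ⟨?_, fun hunit ↦ ?_⟩
  · simpa using natDegree_le_card_mul_degT hsplit hint (fun _ _ ↦ Finset.mem_univ _)
      fun c _ ↦ heval c
  · have hres (β : LaurentSeries F) (hβ : (f.map (algebraMap F[X] (LaurentSeries F))).IsRoot β) :
        β.coeff 0 ∈ Finset.univ.erase 0 := by
      obtain ⟨hβ0, hord⟩ := hunit β hβ
      exact Finset.mem_erase.mpr
        ⟨hord ▸ mt HahnSeries.coeff_order_eq_zero.mp hβ0, Finset.mem_univ _⟩
    simpa using natDegree_le_card_mul_degT hsplit hint hres fun c _ ↦ heval c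

/-- A nonconstant totally $T$-adic integer has height at least $1/q$, and a
nonconstant totally $T$-adic unit has height at least $1/(q-1)$: with all roots of
$f$ of valuation $≥ 0$ one has $\deg_X f ≤ q·\deg_T f$, and with all roots of
valuation exactly $0$ one has $\deg_X f ≤ (q-1)·\deg_T f$. -/
theorem integer_and_unit_height_bounds {F : Type*} [Field F] [Fintype F]
    (f : Polynomial (Polynomial F)) (hprim : f.IsPrimitive)
    (hirr : Irreducible (toRat f))
    (hT : 1 ≤ degT f)
    (hsplit : SplitsCompletely f)
    (hint : ∀ β : LaurentSeries F,
      (f.map (algebraMap (Polynomial F) (LaurentSeries F))).IsRoot β → 0 ≤ β.order) :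
    f.natDegree ≤ Fintype.card F * degT f ∧
      ((∀ β : LaurentSeries F,
          (f.map (algebraMap (Polynomial F) (LaurentSeries F))).IsRoot β →
            β ≠ 0 ∧ β.order = 0) →
        f.natDegree ≤ (Fintype.card F - 1) * degT f) :=
  integer_and_unit_height_bounds_general f hirr hT hsplit hint
end
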